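/- arXiv:math/0208145 — 3 statements merged into one kernel-verified Lean document; each statement's English description precedes it below -/
import Mathlib

section
/- With the notation of the previous statement (k ≠ 0, a = (e^{|k|}β − α)/(|k|(e^{|k|} − e^{−|k|})), b = (β − e^{|k|}α)/(|k|(e^{|k|} − e^{−|k|}))), there is an absolute constant C such that |a|² ≤ C(|α|² + |β|²)/k² and |b|² ≤ C(|α|² + |β|²)/k². -/
lemma aux_key (t : ℝ) (ht : 1 ≤ t) (α β : ℂ) (z : ℂ)
    (hz : ‖z‖ ≤ Real.exp t * (‖α‖ + ‖β‖)) :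
    ‖z / (((t : ℝ) : ℂ) * ((Real.exp t - Real.exp (-t) : ℝ) : ℂ))‖ ^ 2
      ≤ (2 / (1 - Real.exp (-2 : ℝ)) ^ 2) * (‖α‖ ^ 2 + ‖β‖ ^ 2) / t ^ 2 := by
  have ht0 : 0 < t := lt_of_lt_of_le one_pos ht
  have hc : 0 < 1 - Real.exp (-2 : ℝ) := by
    have : Real.exp (-2 : ℝ) < 1 := Real.exp_lt_one_iff.mpr (by norm_num)
    linarith
  have hE : (1:ℝ) ≤ Real.exp t := by
    have := Real.one_le_exp (le_trans zero_le_one ht)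
    simpa using Real.one_le_exp (le_trans zero_le_one ht)
  have hEm : Real.exp (-t) ≤ Real.exp t * Real.exp (-2 : ℝ) := by
    rw [← Real.exp_add]
    exact Real.exp_le_exp.mpr (by linarith)
  have hden : Real.exp t * (1 - Real.exp (-2 : ℝ)) ≤ Real.exp t - Real.exp (-t) := by
    nlinarith
  have hdenpos : 0 < Real.exp t - Real.exp (-t) := by
    nlinarith [Real.exp_pos t]
  -- norm of quotient
  have hnorm : ‖z / (((t : ℝ) : ℂ) * ((Real.exp t - Real.exp (-t) : ℝ) : ℂ))‖
      = ‖z‖ / (t * (Real.exp t - Real.exp (-t))) := by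
    rw [norm_div]
    congr 1
    rw [norm_mul, Complex.norm_real, Complex.norm_real,
      Real.norm_of_nonneg ht0.le, Real.norm_of_nonneg hdenpos.le]
  rw [hnorm]
  have hs : 0 ≤ ‖α‖ + ‖β‖ := by positivity
  have key : ‖z‖ / (t * (Real.exp t - Real.exp (-t)))
      ≤ (‖α‖ + ‖β‖) / ((1 - Real.exp (-2 : ℝ)) * t) := by
    rw [div_le_div_iff₀ (by positivity) (by positivity)]
    calc ‖z‖ * ((1 - Real.exp (-2:ℝ)) * t)
        ≤ (Real.exp t * (‖α‖ + ‖β‖)) * ((1 - Real.exp (-2:ℝ)) * t) := by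
          apply mul_le_mul_of_nonneg_right hz (by positivity)
      _ ≤ (‖α‖ + ‖β‖) * (t * (Real.exp t - Real.exp (-t))) := by
          nlinarith [mul_le_mul_of_nonneg_left hden (mul_nonneg hs ht0.le)]
  have h2 : (‖α‖ + ‖β‖)^2 ≤ 2 * (‖α‖^2 + ‖β‖^2) := by nlinarith [sq_nonneg (‖α‖ - ‖β‖)]
  calc (‖z‖ / (t * (Real.exp t - Real.exp (-t))))^2
      ≤ ((‖α‖ + ‖β‖) / ((1 - Real.exp (-2:ℝ)) * t))^2 := by
        apply pow_le_pow_left₀ (by positivity) key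
    _ = (‖α‖ + ‖β‖)^2 / ((1 - Real.exp (-2:ℝ))^2 * t^2) := by rw [div_pow, mul_pow]
    _ ≤ (2 * (‖α‖^2 + ‖β‖^2)) / ((1 - Real.exp (-2:ℝ))^2 * t^2) := by
        apply div_le_div_of_nonneg_right h2 (by positivity) |>.trans_eq rfl
    _ = (2 / (1 - Real.exp (-2:ℝ))^2) * (‖α‖^2 + ‖β‖^2) / t^2 := by
        rw [div_mul_eq_mul_div, div_div, mul_comm ((1 - Real.exp (-2:ℝ))^2) (t^2), ← div_div]

theorem stmt4 :
    ∃ C : ℝ, 0 < C ∧ ∀ (k : ℤ), k ≠ 0 → ∀ (α β a b : ℂ),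
      a = (((Real.exp |(k:ℝ)| : ℝ) : ℂ) * β - α) /
          (((|(k:ℝ)| : ℝ) : ℂ) * ((Real.exp |(k:ℝ)| - Real.exp (-|(k:ℝ)|) : ℝ) : ℂ)) →
      b = (β - ((Real.exp |(k:ℝ)| : ℝ) : ℂ) * α) /
          (((|(k:ℝ)| : ℝ) : ℂ) * ((Real.exp |(k:ℝ)| - Real.exp (-|(k:ℝ)|) : ℝ) : ℂ)) →
      ‖a‖ ^ 2 ≤ C * (‖α‖ ^ 2 + ‖β‖ ^ 2) / (k : ℝ) ^ 2 ∧
      ‖b‖ ^ 2 ≤ C * (‖α‖ ^ 2 + ‖β‖ ^ 2) / (k : ℝ) ^ 2 := by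
  refine ⟨2 / (1 - Real.exp (-2 : ℝ)) ^ 2, ?_, ?_⟩
  · have hc : 0 < 1 - Real.exp (-2 : ℝ) := by
      have : Real.exp (-2 : ℝ) < 1 := Real.exp_lt_one_iff.mpr (by norm_num)
      linarith
    exact div_pos two_pos (pow_pos hc 2)
  intro k hk α β a b ha hb
  set t : ℝ := |(k : ℝ)| with htdef
  have ht : (1:ℝ) ≤ t := by
    rw [htdef, ← Int.cast_abs]
    exact_mod_cast Int.one_le_abs hk
  have hE : (1:ℝ) ≤ Real.exp t := Real.one_le_exp (by linarith)
  have hk2 : ((k:ℝ))^2 = t^2 := (sq_abs _).symm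
  rw [hk2]
  constructor
  · rw [ha]
    apply aux_key t ht α β
    calc ‖((Real.exp t : ℝ):ℂ) * β - α‖ ≤ ‖((Real.exp t : ℝ):ℂ) * β‖ + ‖α‖ := norm_sub_le _ _
      _ = Real.exp t * ‖β‖ + ‖α‖ := by
          rw [norm_mul, Complex.norm_real, Real.norm_of_nonneg (Real.exp_pos t).le]
      _ ≤ Real.exp t * (‖α‖ + ‖β‖) := by nlinarith [norm_nonneg α, norm_nonneg β]
  · rw [hb]
    apply aux_key t ht α β
    calc ‖β - ((Real.exp t : ℝ):ℂ) * α‖ ≤ ‖β‖ + ‖((Real.exp t : ℝ):ℂ) * α‖ := norm_sub_le _ _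
      _ = ‖β‖ + Real.exp t * ‖α‖ := by
          rw [norm_mul, Complex.norm_real, Real.norm_of_nonneg (Real.exp_pos t).le]
      _ ≤ Real.exp t * (‖α‖ + ‖β‖) := by nlinarith [norm_nonneg α, norm_nonneg β]
end

section
/- Let k ∈ ℤ, k ≠ 0, α, β ∈ ℂ, and let ĥ(y) = a e^{|k|(y−1)} + b e^{−|k|y} be the solution of ĥ'' = k²ĥ on [0,1] with ĥ'(0) = α, ĥ'(1) = β. Then there is an absolute constant C with k²‖ĥ‖²_{L²(0,1)} ≤ C(|α|² + |β|²) and ‖ĥ'‖²_{L²(0,1)} ≤ C(|α|² + |β|²). -/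
/-!
Write `K = |k| ≥ 1`. Both `ĥ` and `ĥ' = K a e^{K(y-1)} - K b e^{-Ky}` are of the form
`a e^{K(y-1)} + b e^{-Ky}`, whose squared `L²(0,1)` norm is at most `(|a|² + |b|²)/K`, since each
exponential is concentrated in a boundary layer of width `1/K`. So both quantities are bounded by
`K (|a|² + |b|²)`, and because `e^K - e^{-K} ≥ e^K / 2`, the coefficients satisfy
`K |a|² ≤ 8 (|α|² + |β|²)`, and likewise for `b`.
-/
open MeasureTheory Set

theorem integral_exp_neg_mul_unitInterval {c : ℝ} (hc : c ≠ 0) :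
    ∫ y in (0:ℝ)..1, Real.exp (-(c * y)) = (1 - Real.exp (-c)) / c := by
  have hscale := intervalIntegral.integral_comp_mul_left (fun x => Real.exp (-x)) hc (a := 0) (b := 1)
  rw [hscale, intervalIntegral.integral_comp_neg, integral_exp]
  simp [div_eq_inv_mul]

theorem integral_exp_mul_sub_one_unitInterval {c : ℝ} (hc : c ≠ 0) :
    ∫ y in (0:ℝ)..1, Real.exp (c * (y - 1)) = (1 - Real.exp (-c)) / c := by
  have hreflect :=
    intervalIntegral.integral_comp_sub_left (fun y => Real.exp (-(c * y))) 1 (a := 0) (b := 1)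
  simp only [sub_zero, sub_self] at hreflect
  rw [← integral_exp_neg_mul_unitInterval hc, ← hreflect]
  congr 1; ext y; ring_nf

noncomputable def expProfile (K : ℝ) (a b : ℂ) (y : ℝ) : ℂ :=
  a * Complex.exp ((K * (y - 1) : ℝ) : ℂ) + b * Complex.exp ((-(K * y) : ℝ) : ℂ)

theorem norm_expProfile_sq_le (K : ℝ) (a b : ℂ) (y : ℝ) :
    ‖expProfile K a b y‖ ^ 2 ≤
      2 * ‖a‖ ^ 2 * Real.exp (2 * K * (y - 1)) + 2 * ‖b‖ ^ 2 * Real.exp (-(2 * K * y)) := by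
  have hnorm : ‖expProfile K a b y‖ ≤ ‖a‖ * Real.exp (K * (y - 1)) + ‖b‖ * Real.exp (-(K * y)) := by
    refine (norm_add_le _ _).trans_eq ?_
    rw [norm_mul, norm_mul, Complex.norm_exp_ofReal, Complex.norm_exp_ofReal]
  calc ‖expProfile K a b y‖ ^ 2
      ≤ (‖a‖ * Real.exp (K * (y - 1)) + ‖b‖ * Real.exp (-(K * y))) ^ 2 := by gcongr
    _ ≤ 2 * ((‖a‖ * Real.exp (K * (y - 1))) ^ 2 + (‖b‖ * Real.exp (-(K * y))) ^ 2) := add_sq_le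
    _ = _ := by rw [mul_pow, mul_pow, ← Real.exp_nat_mul, ← Real.exp_nat_mul]; push_cast; ring_nf

theorem integral_norm_expProfile_sq_le {K : ℝ} (hK : 0 < K) (a b : ℂ) :
    ∫ y in Icc (0:ℝ) 1, ‖expProfile K a b y‖ ^ 2 ≤ (‖a‖ ^ 2 + ‖b‖ ^ 2) / K := by
  have h2K : 2 * K ≠ 0 := by positivity
  have hdecay : 1 - Real.exp (-(2 * K)) ≤ 1 := by linarith [Real.exp_pos (-(2 * K))]
  rw [integral_Icc_eq_integral_Ioc, ← intervalIntegral.integral_of_le zero_le_one]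
  calc ∫ y in (0:ℝ)..1, ‖expProfile K a b y‖ ^ 2
      ≤ ∫ y in (0:ℝ)..1,
          2 * ‖a‖ ^ 2 * Real.exp (2 * K * (y - 1)) + 2 * ‖b‖ ^ 2 * Real.exp (-(2 * K * y)) := by
        refine intervalIntegral.integral_mono_on zero_le_one ?_ ?_ fun y _ =>
          norm_expProfile_sq_le K a b y
        · exact Continuous.intervalIntegrable (by unfold expProfile; fun_prop) _ _
        · exact Continuous.intervalIntegrable (by fun_prop) _ _
    _ = (‖a‖ ^ 2 + ‖b‖ ^ 2) * (1 - Real.exp (-(2 * K))) / K := by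
        rw [intervalIntegral.integral_add, intervalIntegral.integral_const_mul,
          intervalIntegral.integral_const_mul, integral_exp_mul_sub_one_unitInterval h2K,
          integral_exp_neg_mul_unitInterval h2K]
        · field_simp
        all_goals exact Continuous.intervalIntegrable (by fun_prop) _ _
    _ ≤ (‖a‖ ^ 2 + ‖b‖ ^ 2) / K := by
        gcongr
        exact mul_le_of_le_one_right (by positivity) hdecay

theorem hasDerivAt_expProfile (K : ℝ) (a b : ℂ) (y : ℝ) :
    HasDerivAt (expProfile K a b) (expProfile K (K * a) (-(K * b)) y) y := by
  have h₁ : HasDerivAt (fun y : ℝ => K * (y - 1)) K y := by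
    simpa using ((hasDerivAt_id y).sub_const 1).const_mul K
  have h₂ : HasDerivAt (fun y : ℝ => -(K * y)) (-K) y := by
    simpa using (hasDerivAt_id y).const_mul (-K)
  refine ((h₁.ofReal_comp.cexp.const_mul a).add (h₂.ofReal_comp.cexp.const_mul b)).congr_deriv ?_
  simp only [expProfile]
  push_cast
  ring

theorem deriv_expProfile (K : ℝ) (a b : ℂ) :
    deriv (expProfile K a b) = expProfile K (K * a) (-(K * b)) :=
  funext fun y => (hasDerivAt_expProfile K a b y).deriv

theorem mul_norm_coeff_sq_le {K : ℝ} (hK : 1 ≤ K) (z w : ℂ) :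
    K * ‖(((Real.exp K : ℝ) : ℂ) * z - w) /
        (((K : ℝ) : ℂ) * ((Real.exp K - Real.exp (-K) : ℝ) : ℂ))‖ ^ 2
      ≤ 8 * (‖z‖ ^ 2 + ‖w‖ ^ 2) := by
  set E := Real.exp K
  have hE : 2 ≤ E := by linarith [Real.add_one_le_exp K]
  have hK0 : 0 < K := by linarith
  have hgap : E / 2 ≤ E - Real.exp (-K) := by
    rw [Real.exp_neg]
    have hinv : E⁻¹ ≤ 1 / 2 := by rw [inv_le_comm₀ (by positivity) (by norm_num)]; linarith
    linarith
  have hnum : ‖(E : ℂ) * z - w‖ ≤ E * ‖z‖ + ‖w‖ := by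
    refine (norm_sub_le _ _).trans_eq ?_
    rw [norm_mul, Complex.norm_real, Real.norm_of_nonneg (by positivity)]
  have hD : 0 < K * (E - Real.exp (-K)) := mul_pos hK0 (by linarith)
  have hden : ‖((K : ℝ) : ℂ) * ((E - Real.exp (-K) : ℝ) : ℂ)‖ = K * (E - Real.exp (-K)) := by
    rw [← Complex.ofReal_mul, Complex.norm_real, Real.norm_of_nonneg hD.le]
  rw [norm_div, hden, div_pow, ← mul_div_assoc, div_le_iff₀ (by positivity)]
  have hS : 0 ≤ ‖z‖ ^ 2 + ‖w‖ ^ 2 := by positivity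
  calc K * ‖(E : ℂ) * z - w‖ ^ 2
      ≤ K * (2 * ((E * ‖z‖) ^ 2 + ‖w‖ ^ 2)) := by
        gcongr
        exact (pow_le_pow_left₀ (norm_nonneg _) hnum 2).trans add_sq_le
    _ ≤ 8 * (‖z‖ ^ 2 + ‖w‖ ^ 2) * (K * (E / 2)) ^ 2 := by
        have hKK : K ≤ K ^ 2 := by nlinarith
        have hE1 : 1 ≤ E ^ 2 := by nlinarith
        nlinarith [mul_le_mul_of_nonneg_right hKK (mul_nonneg (sq_nonneg E) hS),
          mul_le_mul_of_nonneg_left hE1 (mul_nonneg hK0.le (sq_nonneg ‖w‖))]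
    _ ≤ 8 * (‖z‖ ^ 2 + ‖w‖ ^ 2) * (K * (E - Real.exp (-K))) ^ 2 := by gcongr

theorem mul_norm_coeffs_sq_le {K : ℝ} (hK : 1 ≤ K) (α β : ℂ) :
    K * (‖(((Real.exp K : ℝ) : ℂ) * β - α) /
          (((K : ℝ) : ℂ) * ((Real.exp K - Real.exp (-K) : ℝ) : ℂ))‖ ^ 2
        + ‖(β - ((Real.exp K : ℝ) : ℂ) * α) /
          (((K : ℝ) : ℂ) * ((Real.exp K - Real.exp (-K) : ℝ) : ℂ))‖ ^ 2)
      ≤ 16 * (‖α‖ ^ 2 + ‖β‖ ^ 2) := by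
  rw [norm_div (β - _), norm_sub_rev, ← norm_div]
  linarith [mul_norm_coeff_sq_le hK β α, mul_norm_coeff_sq_le hK α β]

theorem stmt5 :
    ∃ C : ℝ, 0 < C ∧ ∀ (k : ℤ), k ≠ 0 → ∀ (α β : ℂ) (hhat : ℝ → ℂ),
      (hhat = fun y : ℝ =>
        ((((Real.exp |(k:ℝ)| : ℝ) : ℂ) * β - α) /
            (((|(k:ℝ)| : ℝ) : ℂ) * ((Real.exp |(k:ℝ)| - Real.exp (-|(k:ℝ)|) : ℝ) : ℂ)))
          * Complex.exp ((|(k:ℝ)| * (y - 1) : ℝ) : ℂ)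
        + ((β - ((Real.exp |(k:ℝ)| : ℝ) : ℂ) * α) /
            (((|(k:ℝ)| : ℝ) : ℂ) * ((Real.exp |(k:ℝ)| - Real.exp (-|(k:ℝ)|) : ℝ) : ℂ)))
          * Complex.exp ((-(|(k:ℝ)| * y) : ℝ) : ℂ)) →
      (k : ℝ) ^ 2 * (∫ y in Icc (0:ℝ) 1, ‖hhat y‖ ^ 2) ≤ C * (‖α‖ ^ 2 + ‖β‖ ^ 2) ∧
      (∫ y in Icc (0:ℝ) 1, ‖deriv hhat y‖ ^ 2) ≤ C * (‖α‖ ^ 2 + ‖β‖ ^ 2) := by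
  refine ⟨16, by norm_num, fun k hk α β hhat hhat_eq => ?_⟩
  set K := |(k : ℝ)| with hK_def
  have hK : 1 ≤ K := by rw [hK_def, ← Int.cast_abs]; exact_mod_cast Int.one_le_abs hk
  have hK0 : 0 < K := by linarith
  set D : ℂ := ((K : ℝ) : ℂ) * ((Real.exp K - Real.exp (-K) : ℝ) : ℂ)
  set a := (((Real.exp K : ℝ) : ℂ) * β - α) / D
  set b := (β - ((Real.exp K : ℝ) : ℂ) * α) / D
  have hcoeff : K * (‖a‖ ^ 2 + ‖b‖ ^ 2) ≤ 16 * (‖α‖ ^ 2 + ‖β‖ ^ 2) :=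
    mul_norm_coeffs_sq_le hK α β
  obtain rfl : hhat = expProfile K a b := hhat_eq
  constructor
  · calc (k : ℝ) ^ 2 * ∫ y in Icc (0:ℝ) 1, ‖expProfile K a b y‖ ^ 2
        ≤ K ^ 2 * ((‖a‖ ^ 2 + ‖b‖ ^ 2) / K) := by
          rw [← sq_abs]
          gcongr
          exact integral_norm_expProfile_sq_le hK0 a b
      _ = K * (‖a‖ ^ 2 + ‖b‖ ^ 2) := by field_simp
      _ ≤ _ := hcoeff
  · calc ∫ y in Icc (0:ℝ) 1, ‖deriv (expProfile K a b) y‖ ^ 2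
        ≤ (‖(K : ℂ) * a‖ ^ 2 + ‖-((K : ℂ) * b)‖ ^ 2) / K := by
          rw [deriv_expProfile]
          exact integral_norm_expProfile_sq_le hK0 _ _
      _ = K * (‖a‖ ^ 2 + ‖b‖ ^ 2) := by
          rw [norm_neg, norm_mul, norm_mul, Complex.norm_real, Real.norm_of_nonneg hK0.le]
          field_simp
      _ ≤ _ := hcoeff
end

section
/- Let Ω = [0,1]² and let u = (u₁,u₂) : ℝ×[0,1] → ℝ² be smooth, 1-periodic in x, divergence free, with u(x,0) = u(x,1) = (0,0). Let U(x,y) = (y,0) and let R > 0. If h is smooth, 1-periodic in x, and solves Δh = −∇·((u·∇)U) − ∇·((U·∇)u) on Ω with h_y(x,0) = (1/R)u_{2yy}(x,0) and h_y(x,1) = (1/R)u_{2yy}(x,1), then there is an absolute constant C with ‖∇h‖² ≤ C(‖u‖²_{H¹} + (1/R²)‖u_{2yy}‖² + (1/R²)‖u_{2yyy}‖²). -/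
open MeasureTheory Set

noncomputable def px (f : ℝ × ℝ → ℝ) : ℝ × ℝ → ℝ := fun p => fderiv ℝ f p (1, 0)
noncomputable def py (f : ℝ × ℝ → ℝ) : ℝ × ℝ → ℝ := fun p => fderiv ℝ f p (0, 1)

noncomputable def U1 : ℝ × ℝ → ℝ := fun p => p.2
noncomputable def U2 : ℝ × ℝ → ℝ := fun _ => 0


/-- Smoothness abbreviation -/
abbrev Sm (f : ℝ × ℝ → ℝ) : Prop := ContDiff ℝ (⊤:ℕ∞) f

lemma one_le_top : (1 : WithTop ℕ∞) ≤ ((⊤:ℕ∞) : WithTop ℕ∞) := by exact_mod_cast le_top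
lemma two_le_top : (2 : WithTop ℕ∞) ≤ ((⊤:ℕ∞) : WithTop ℕ∞) := by
  have : ((2:ℕ∞) : WithTop ℕ∞) ≤ ((⊤:ℕ∞) : WithTop ℕ∞) := WithTop.coe_le_coe.mpr le_top
  simpa using this

lemma Sm.diff {f : ℝ × ℝ → ℝ} (hf : Sm f) : Differentiable ℝ f :=
  hf.differentiable (by simp)

lemma Sm.cont {f : ℝ × ℝ → ℝ} (hf : Sm f) : Continuous f := hf.continuous

lemma sm_dir (f : ℝ×ℝ → ℝ) (hf : Sm f) (v : ℝ×ℝ) : Sm (fun p => fderiv ℝ f p v) := by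
  have h1 : ContDiff ℝ (↑(⊤:ℕ∞)) (fderiv ℝ f) := (contDiff_infty_iff_fderiv.mp hf).2
  exact (ContinuousLinearMap.apply ℝ ℝ v).contDiff.comp h1

lemma sm_px (f : ℝ×ℝ → ℝ) (hf : Sm f) : Sm (px f) := sm_dir f hf (1,0)
lemma sm_py (f : ℝ×ℝ → ℝ) (hf : Sm f) : Sm (py f) := sm_dir f hf (0,1)

lemma hasDerivAt_px (f : ℝ×ℝ → ℝ) (hf : Sm f) (x y : ℝ) :
    HasDerivAt (fun t => f (t, y)) (px f (x, y)) x := by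
  have hd : HasFDerivAt f (fderiv ℝ f (x,y)) (x,y) :=
    (hf.diff (x,y)).hasFDerivAt
  have hL : HasDerivAt (fun t : ℝ => (t, y)) ((1:ℝ),(0:ℝ)) x := by
    simpa using (hasDerivAt_id x).prodMk (hasDerivAt_const x y)
  exact hd.comp_hasDerivAt x hL

lemma hasDerivAt_py (f : ℝ×ℝ → ℝ) (hf : Sm f) (x y : ℝ) :
    HasDerivAt (fun t => f (x, t)) (py f (x, y)) y := by
  have hd : HasFDerivAt f (fderiv ℝ f (x,y)) (x,y) :=
    (hf.diff (x,y)).hasFDerivAt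
  have hL : HasDerivAt (fun t : ℝ => (x, t)) ((0:ℝ),(1:ℝ)) y := by
    simpa using (hasDerivAt_const y x).prodMk (hasDerivAt_id y)
  exact hd.comp_hasDerivAt y hL

/-- periodicity in x of a directional derivative -/
lemma per_dir (f : ℝ×ℝ → ℝ) (hf : Sm f) (hper : ∀ x y, f (x+1, y) = f (x,y)) (v : ℝ×ℝ)
    (x y : ℝ) : fderiv ℝ f (x+1, y) v = fderiv ℝ f (x, y) v := by
  have heq : (fun p : ℝ×ℝ => f (p + ((1:ℝ),(0:ℝ)))) = f := by
    funext p
    have h2 : p + ((1:ℝ),(0:ℝ)) = (p.1+1, p.2) := by ext <;> simp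
    rw [h2]; exact hper p.1 p.2
  have hd : DifferentiableAt ℝ f ((x,y) + (1,0)) := (hf.diff _)
  have hcomp : fderiv ℝ (fun p : ℝ×ℝ => f (p + ((1:ℝ),(0:ℝ)))) (x,y)
      = fderiv ℝ f ((x,y) + (1,0)) := by
    have := hd.hasFDerivAt.comp (x,y)
      ((hasFDerivAt_id ((x,y):ℝ×ℝ)).add_const ((1:ℝ),(0:ℝ)))
    simpa [Function.comp_def] using this.fderiv
  have h3 : fderiv ℝ f ((x,y) + ((1:ℝ),(0:ℝ))) = fderiv ℝ f (x,y) := by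
    rw [← hcomp, heq]
  have h4 : ((x,y) + ((1:ℝ),(0:ℝ)) : ℝ×ℝ) = (x+1, y) := by ext <;> simp
  rw [h4] at h3; rw [h3]

lemma per_px (f : ℝ×ℝ → ℝ) (hf : Sm f) (hper : ∀ x y, f (x+1, y) = f (x,y)) :
    ∀ x y, px f (x+1, y) = px f (x,y) := fun x y => per_dir f hf hper (1,0) x y
lemma per_py (f : ℝ×ℝ → ℝ) (hf : Sm f) (hper : ∀ x y, f (x+1, y) = f (x,y)) :
    ∀ x y, py f (x+1, y) = py f (x,y) := fun x y => per_dir f hf hper (0,1) x y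

/-- product rule -/
lemma px_mul (f g : ℝ×ℝ → ℝ) (hf : Sm f) (hg : Sm g) (p : ℝ×ℝ) :
    px (fun q => f q * g q) p = px f p * g p + f p * px g p := by
  have := fderiv_fun_mul (𝕜 := ℝ) (hf.diff p) (hg.diff p)
  simp [px, this]; ring

lemma py_mul (f g : ℝ×ℝ → ℝ) (hf : Sm f) (hg : Sm g) (p : ℝ×ℝ) :
    py (fun q => f q * g q) p = py f p * g p + f p * py g p := by
  have := fderiv_fun_mul (𝕜 := ℝ) (hf.diff p) (hg.diff p)
  simp [py, this]; ring

lemma px_add (f g : ℝ×ℝ → ℝ) (hf : Sm f) (hg : Sm g) (p : ℝ×ℝ) :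
    px (fun q => f q + g q) p = px f p + px g p := by
  have := fderiv_fun_add (𝕜 := ℝ) (hf.diff p) (hg.diff p)
  simp [px, this]

/-- mixed partials commute -/
lemma pxpy_comm (f : ℝ×ℝ → ℝ) (hf : Sm f) (p : ℝ×ℝ) :
    px (py f) p = py (px f) p := by
  have hsymm : IsSymmSndFDerivAt ℝ f p := by
    exact (hf.contDiffAt).isSymmSndFDerivAt (by rw [minSmoothness_of_isRCLikeNormedField]; exact two_le_top)
  have key : ∀ v w : ℝ×ℝ, fderiv ℝ (fun q => fderiv ℝ f q w) p v
      = fderiv ℝ (fderiv ℝ f) p v w := by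
    intro v w
    have hdf : DifferentiableAt ℝ (fderiv ℝ f) p :=
      ((contDiff_infty_iff_fderiv.mp hf).2.differentiable (by simp) p)
    have hcd := ((ContinuousLinearMap.apply ℝ ℝ w).hasFDerivAt.comp p hdf.hasFDerivAt).fderiv
    calc fderiv ℝ (fun q => fderiv ℝ f q w) p v
        = (fderiv ℝ ((ContinuousLinearMap.apply ℝ ℝ w) ∘ (fderiv ℝ f)) p) v := rfl
      _ = ((ContinuousLinearMap.apply ℝ ℝ w).comp (fderiv ℝ (fderiv ℝ f) p)) v := by rw [hcd]
      _ = fderiv ℝ (fderiv ℝ f) p v w := rfl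
  have h1 := key (1,0) (0,1)
  have h2 := key (0,1) (1,0)
  have := hsymm.eq (1,0) (0,1)
  have e1 : px (py f) p = fderiv ℝ (fun q => fderiv ℝ f q (0,1)) p (1,0) := rfl
  have e2 : py (px f) p = fderiv ℝ (fun q => fderiv ℝ f q (1,0)) p (0,1) := rfl
  rw [e1, e2, h1, h2, this]
noncomputable def QQ : Set (ℝ×ℝ) := Icc (0:ℝ) 1 ×ˢ Icc (0:ℝ) 1

lemma integrableOn_QQ (f : ℝ×ℝ → ℝ) (hf : Continuous f) : IntegrableOn f QQ :=
  hf.continuousOn.integrableOn_compact (isCompact_Icc.prod isCompact_Icc)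

lemma fub1 (f : ℝ×ℝ → ℝ) (hf : Continuous f) :
    ∫ p in QQ, f p = ∫ x in Icc (0:ℝ) 1, ∫ y in Icc (0:ℝ) 1, f (x,y) := by
  have h := integrableOn_QQ f hf
  rw [show (volume : Measure (ℝ×ℝ)) = (volume.prod volume) from rfl] at *
  exact MeasureTheory.setIntegral_prod f h

lemma fub2 (f : ℝ×ℝ → ℝ) (hf : Continuous f) :
    ∫ p in QQ, f p = ∫ y in Icc (0:ℝ) 1, ∫ x in Icc (0:ℝ) 1, f (x,y) := by
  rw [fub1 f hf]
  have h : Integrable (Function.uncurry (fun x y => f (x,y)))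
      (((volume : Measure ℝ).restrict (Icc 0 1)).prod ((volume : Measure ℝ).restrict (Icc 0 1))) := by
    rw [Measure.prod_restrict]
    exact integrableOn_QQ f hf
  exact MeasureTheory.integral_integral_swap h

lemma icc_eq (g : ℝ → ℝ) : ∫ t in Icc (0:ℝ) 1, g t = ∫ t in (0:ℝ)..1, g t := by
  rw [intervalIntegral.integral_of_le zero_le_one, ← integral_Icc_eq_integral_Ioc]

lemma ftc (g g' : ℝ → ℝ) (hd : ∀ t, HasDerivAt g (g' t) t) (hc : Continuous g') :
    ∫ t in Icc (0:ℝ) 1, g' t = g 1 - g 0 := by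
  rw [icc_eq]
  exact intervalIntegral.integral_eq_sub_of_hasDerivAt (fun t _ => hd t)
    (hc.intervalIntegrable 0 1)

lemma int_px_zero (f : ℝ×ℝ → ℝ) (hf : Sm f) (hper : ∀ x y, f (x+1,y) = f (x,y)) (y : ℝ) :
    ∫ x in Icc (0:ℝ) 1, px f (x, y) = 0 := by
  have hc : Continuous (fun t : ℝ => px f (t, y)) :=
    (sm_px f hf).cont.comp (by continuity)
  rw [ftc (fun t => f (t,y)) (fun t => px f (t,y)) (fun t => hasDerivAt_px f hf t y) hc]
  have := hper 0 y
  simp only [zero_add] at this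
  rw [this, sub_self]

lemma int_py (f : ℝ×ℝ → ℝ) (hf : Sm f) (x : ℝ) :
    ∫ y in Icc (0:ℝ) 1, py f (x,y) = f (x,1) - f (x,0) := by
  have hc : Continuous (fun t : ℝ => py f (x, t)) :=
    (sm_py f hf).cont.comp (by continuity)
  exact ftc (fun t => f (x,t)) (fun t => py f (x,t)) (fun t => hasDerivAt_py f hf x t) hc

lemma setint_px_zero (f : ℝ×ℝ → ℝ) (hf : Sm f) (hper : ∀ x y, f (x+1,y) = f (x,y)) :
    ∫ p in QQ, px f p = 0 := by
  rw [fub2 _ (sm_px f hf).cont]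
  have : (fun y => ∫ x in Icc (0:ℝ) 1, px f (x, y)) = fun _ => (0:ℝ) :=
    funext fun y => int_px_zero f hf hper y
  rw [this]
  simp

lemma bdry_to_area (f : ℝ×ℝ → ℝ) (hf : Sm f) :
    ∫ x in Icc (0:ℝ) 1, (f (x,1) - f (x,0)) = ∫ p in QQ, py f p := by
  rw [fub1 _ (sm_py f hf).cont]
  have : (fun x => f (x,1) - f (x,0)) = fun x => ∫ y in Icc (0:ℝ) 1, py f (x,y) :=
    funext fun x => (int_py f hf x).symm
  rw [← this]

lemma sm_mul (f g : ℝ×ℝ → ℝ) (hf : Sm f) (hg : Sm g) : Sm (fun q => f q * g q) := hf.mul hg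

lemma ibp_x (f g : ℝ×ℝ → ℝ) (hf : Sm f) (hg : Sm g)
    (hpf : ∀ x y, f (x+1,y) = f (x,y)) (hpg : ∀ x y, g (x+1,y) = g (x,y)) :
    ∫ p in QQ, (px f p * g p + f p * px g p) = 0 := by
  have h1 : (fun p => px f p * g p + f p * px g p) = px (fun q => f q * g q) :=
    funext fun p => (px_mul f g hf hg p).symm
  rw [h1]
  exact setint_px_zero _ (sm_mul f g hf hg) (fun x y => by rw [hpf, hpg])

lemma ibp_y (f g : ℝ×ℝ → ℝ) (hf : Sm f) (hg : Sm g) :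
    ∫ p in QQ, (py f p * g p + f p * py g p)
      = ∫ x in Icc (0:ℝ) 1, (f (x,1) * g (x,1) - f (x,0) * g (x,0)) := by
  have h1 : (fun p => py f p * g p + f p * py g p) = py (fun q => f q * g q) :=
    funext fun p => (py_mul f g hf hg p).symm
  rw [h1, ← bdry_to_area _ (sm_mul f g hf hg)]
lemma cs_set {α : Type*} [MeasurableSpace α] {μ : Measure α} {s : Set α} (f : α → ℝ)
    (h1 : IntegrableOn f s μ) (h2 : IntegrableOn (fun a => (f a)^2) s μ)
    (hμ : μ s = 1) :
    (∫ a in s, f a ∂μ)^2 ≤ ∫ a in s, (f a)^2 ∂μ := by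
  set m := ∫ a in s, f a ∂μ with hm
  have hconst : IntegrableOn (fun _ : α => m^2) s μ :=
    integrableOn_const (by rw [hμ]; exact ENNReal.one_ne_top)
  have h0 : 0 ≤ ∫ a in s, (f a - m)^2 ∂μ := integral_nonneg (fun a => sq_nonneg _)
  have hexp : (fun a => (f a - m)^2) = (fun a => ((f a)^2 - (2*m) * f a) + m^2) := by
    funext a; ring
  rw [hexp] at h0
  have hsub : IntegrableOn (fun a => f a ^ 2 - 2*m*f a) s μ := by
    exact h2.sub (h1.const_mul (2*m))
  have e1 : ∫ a in s, (f a ^ 2 - 2*m*f a + m^2) ∂μ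
      = (∫ a in s, (f a ^ 2 - 2*m*f a) ∂μ) + ∫ a in s, (fun _ => m^2) a ∂μ :=
    integral_add hsub hconst
  have e2 : ∫ a in s, (f a ^ 2 - 2*m*f a) ∂μ
      = (∫ a in s, f a ^ 2 ∂μ) - ∫ a in s, (2*m) * f a ∂μ := by
    have := integral_sub h2 (h1.const_mul (2*m))
    simpa using this
  have e3 : ∫ a in s, (2*m) * f a ∂μ = (2*m) * m := by
    rw [MeasureTheory.integral_const_mul]
  have e4 : ∫ a in s, (fun _ => m^2) a ∂μ = m^2 := by
    rw [setIntegral_const, measureReal_def, hμ]; simp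
  rw [e1, e2, e3, e4] at h0
  nlinarith [h0]

lemma vol_QQ : (volume : Measure (ℝ×ℝ)) QQ = 1 := by
  show (volume.prod volume) (Icc (0:ℝ) 1 ×ˢ Icc (0:ℝ) 1) = 1
  rw [Measure.prod_prod]
  simp [Real.volume_Icc]

lemma vol_I1 : (volume : Measure ℝ) (Icc (0:ℝ) 1) = 1 := by simp [Real.volume_Icc]

lemma cs_QQ (f : ℝ×ℝ → ℝ) (hf : Continuous f) :
    (∫ p in QQ, f p)^2 ≤ ∫ p in QQ, (f p)^2 :=
  cs_set f (integrableOn_QQ f hf) (integrableOn_QQ _ (by continuity)) vol_QQ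

lemma cs_I1 (g : ℝ → ℝ) (hg : Continuous g) :
    (∫ t in Icc (0:ℝ) 1, g t)^2 ≤ ∫ t in Icc (0:ℝ) 1, (g t)^2 :=
  cs_set g (hg.continuousOn.integrableOn_compact isCompact_Icc)
    ((by continuity : Continuous (fun t => (g t)^2)).continuousOn.integrableOn_compact
      isCompact_Icc) vol_I1

lemma abs_ii_le (g : ℝ → ℝ) (hg : Continuous g) (a b : ℝ) (ha : a ∈ Icc (0:ℝ) 1)
    (hb : b ∈ Icc (0:ℝ) 1) :
    |∫ t in a..b, g t| ≤ ∫ t in Icc (0:ℝ) 1, |g t| := by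
  have h1 : |∫ t in a..b, g t| ≤ |∫ t in a..b, abs (g t)| := by
    have h2 : ‖∫ t in a..b, g t‖ ≤ |∫ t in a..b, ‖g t‖| :=
      intervalIntegral.norm_integral_le_abs_integral_norm
    simpa [Real.norm_eq_abs] using h2
  refine h1.trans ?_
  have habs : ∀ (u v : ℝ), u ∈ Icc (0:ℝ) 1 → v ∈ Icc (0:ℝ) 1 → u ≤ v →
      ∫ t in u..v, |g t| ≤ ∫ t in Icc (0:ℝ) 1, |g t| := by
    intro u v hu hv huv
    rw [intervalIntegral.integral_of_le huv, ← integral_Icc_eq_integral_Ioc]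
    refine setIntegral_mono_set
      ((hg.abs.continuousOn).integrableOn_compact isCompact_Icc)
      (Filter.Eventually.of_forall (fun t => abs_nonneg _))
      (HasSubset.Subset.eventuallyLE (Icc_subset_Icc hu.1 hv.2))
  rcases le_total a b with hab | hab
  · have := habs a b ha hb hab
    have hnn : 0 ≤ ∫ t in a..b, |g t| :=
      intervalIntegral.integral_nonneg hab (fun t _ => abs_nonneg _)
    rwa [abs_of_nonneg hnn]
  · have := habs b a hb ha hab
    rw [intervalIntegral.integral_symm, abs_neg]
    have hnn : 0 ≤ ∫ t in b..a, |g t| :=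
      intervalIntegral.integral_nonneg hab (fun t _ => abs_nonneg _)
    rwa [abs_of_nonneg hnn]
lemma msQQ : MeasurableSet QQ := (measurableSet_Icc.prod measurableSet_Icc)

lemma cont_param1 (g : ℝ×ℝ → ℝ) (hg : Continuous g) :
    Continuous (fun x => ∫ t in (0:ℝ)..1, g (x, t)) := by
  apply intervalIntegral.continuous_parametric_intervalIntegral_of_continuous'
  exact hg

lemma cont_param2 (g : ℝ×ℝ → ℝ) (hg : Continuous g) :
    Continuous (fun t => ∫ r in (0:ℝ)..1, g (r, t)) := by
  apply intervalIntegral.continuous_parametric_intervalIntegral_of_continuous'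
    (f := fun t r => g (r, t))
  exact hg.comp (continuous_snd.prodMk continuous_fst)

lemma poincare (h : ℝ×ℝ → ℝ) (hh : Sm h) :
    ∫ p in QQ, (h p - ∫ q in QQ, h q)^2
      ≤ 2 * (∫ p in QQ, (px h p)^2) + 2 * (∫ p in QQ, (py h p)^2) := by
  set c := ∫ q in QQ, h q with hc
  set a := ∫ q in QQ, |px h q| with ha
  set B : ℝ → ℝ := fun x => ∫ t in (0:ℝ)..1, |py h (x,t)| with hB
  set D : ℝ → ℝ := fun t => ∫ r in (0:ℝ)..1, |px h (r,t)| with hD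
  have hpxc : Continuous (px h) := (sm_px h hh).cont
  have hpyc : Continuous (py h) := (sm_py h hh).cont
  have hBc : Continuous B := cont_param1 _ hpyc.abs
  have hDc : Continuous D := cont_param2 _ hpxc.abs
  -- D and B as Icc integrals
  have hBIcc : ∀ x, B x = ∫ t in Icc (0:ℝ) 1, |py h (x,t)| := fun x => (icc_eq _).symm
  have hDIcc : ∀ t, D t = ∫ r in Icc (0:ℝ) 1, |px h (r,t)| := fun t => (icc_eq _).symm
  -- integral of D over QQ equals a
  have hDint : ∫ q in QQ, D q.2 = a := by
    rw [ha, fub2 (fun q => |px h q|) hpxc.abs,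
      fub2 (fun q => D q.2) (hDc.comp continuous_snd)]
    have e : (fun y => ∫ x in Icc (0:ℝ) 1, D y) = fun y => D y := by
      funext y; rw [setIntegral_const, measureReal_def, vol_I1]; simp
    rw [e]
    congr 1; funext y; exact hDIcc y
  -- core pointwise bound
  have hcore : ∀ x y x' y', x ∈ Icc (0:ℝ) 1 → y ∈ Icc (0:ℝ) 1 → x' ∈ Icc (0:ℝ) 1 →
      y' ∈ Icc (0:ℝ) 1 → |h (x,y) - h (x',y')| ≤ B x + D y' := by
    intro x y x' y' hx hy hx' hy'
    have d1 : ∫ s in y'..y, py h (x,s) = h (x,y) - h (x,y') :=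
      intervalIntegral.integral_eq_sub_of_hasDerivAt
        (fun t _ => hasDerivAt_py h hh x t)
        ((hpyc.comp (continuous_const.prodMk continuous_id)).intervalIntegrable _ _)
    have d2 : ∫ r in x'..x, px h (r,y') = h (x,y') - h (x',y') :=
      intervalIntegral.integral_eq_sub_of_hasDerivAt
        (fun t _ => hasDerivAt_px h hh t y')
        ((hpxc.comp (continuous_id.prodMk continuous_const)).intervalIntegrable _ _)
    have b1 : |h (x,y) - h (x,y')| ≤ B x := by
      rw [← d1, hBIcc]
      exact abs_ii_le _ (hpyc.comp (continuous_const.prodMk continuous_id)) y' y hy' hy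
    have b2 : |h (x,y') - h (x',y')| ≤ D y' := by
      rw [← d2, hDIcc]
      exact abs_ii_le _ (hpxc.comp (continuous_id.prodMk continuous_const)) x' x hx' hx
    calc |h (x,y) - h (x',y')|
        = |(h (x,y) - h (x,y')) + (h (x,y') - h (x',y'))| := by ring_nf
      _ ≤ |h (x,y) - h (x,y')| + |h (x,y') - h (x',y')| := abs_add_le _ _
      _ ≤ B x + D y' := add_le_add b1 b2
  -- kernel bound
  have hker : ∀ p ∈ QQ, |h p - c| ≤ B p.1 + a := by
    intro p hp
    have hp : p.1 ∈ Icc (0:ℝ) 1 ∧ p.2 ∈ Icc (0:ℝ) 1 := hp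
    have e0 : h p - c = ∫ q in QQ, (h p - h q) := by
      rw [integral_sub (integrableOn_const (μ := volume) (s := QQ) (C := h p) (by rw [vol_QQ]; exact ENNReal.one_ne_top))
        (integrableOn_QQ h hh.cont), setIntegral_const, measureReal_def, vol_QQ]
      simp [hc]
    rw [e0]
    have e1 : |∫ q in QQ, (h p - h q)| ≤ ∫ q in QQ, |h p - h q| := by
      simpa [Real.norm_eq_abs] using
        MeasureTheory.norm_integral_le_integral_norm (μ := volume.restrict QQ)
          (fun q => h p - h q)
    refine e1.trans ?_
    have e2 : ∫ q in QQ, |h p - h q| ≤ ∫ q in QQ, (B p.1 + D q.2) := by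
      refine setIntegral_mono_on
        (integrableOn_QQ (fun q => |h p - h q|) ((continuous_const.sub hh.cont).abs))
        (integrableOn_QQ _ (continuous_const.add (hDc.comp continuous_snd)))
        msQQ ?_
      intro q hq
      have hq : q.1 ∈ Icc (0:ℝ) 1 ∧ q.2 ∈ Icc (0:ℝ) 1 := hq
      have := hcore p.1 p.2 q.1 q.2 hp.1 hp.2 hq.1 hq.2
      simpa using this
    refine e2.trans ?_
    rw [integral_add (integrableOn_const (μ := volume) (s := QQ) (C := B p.1) (by rw [vol_QQ]; exact ENNReal.one_ne_top))
      (integrableOn_QQ (fun q => D q.2) (hDc.comp continuous_snd)), setIntegral_const, measureReal_def, vol_QQ, hDint]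
    simp
  -- squared bound
  have hsq : ∀ p ∈ QQ, (h p - c)^2 ≤ 2*(B p.1)^2 + 2*a^2 := by
    intro p hp
    have h1 := hker p hp
    have h2 : (0:ℝ) ≤ |h p - c| := abs_nonneg _
    nlinarith [sq_abs (h p - c), sq_nonneg (B p.1 - a), sq_nonneg (B p.1 + a)]
  have main1 : ∫ p in QQ, (h p - c)^2 ≤ ∫ p in QQ, (2*(B p.1)^2 + 2*a^2) := by
    refine setIntegral_mono_on (integrableOn_QQ (fun p => (h p - c)^2) ((hh.cont.sub continuous_const).pow 2))
      (integrableOn_QQ (fun p => 2*(B p.1)^2 + 2*a^2) ((continuous_const.mul ((hBc.comp continuous_fst).pow 2)).add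
        continuous_const)) msQQ hsq
  refine main1.trans ?_
  -- evaluate and bound the RHS
  have e3 : ∫ p in QQ, (2*(B p.1)^2 + 2*a^2) = 2*(∫ x in Icc (0:ℝ) 1, (B x)^2) + 2*a^2 := by
    rw [integral_add (integrableOn_QQ (fun p => 2*(B p.1)^2) (continuous_const.mul ((hBc.comp continuous_fst).pow 2)))
      (integrableOn_const (by rw [vol_QQ]; exact ENNReal.one_ne_top)),
      setIntegral_const, measureReal_def, vol_QQ]
    have e5 : ∫ p in QQ, 2*(B p.1)^2 = 2 * ∫ p in QQ, (B p.1)^2 := by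
      exact MeasureTheory.integral_const_mul 2 _
    rw [e5, fub1 (fun p => (B p.1)^2) ((hBc.comp continuous_fst).pow 2)]
    have e6 : (fun x => ∫ y in Icc (0:ℝ) 1, (B x)^2) = fun x => (B x)^2 := by
      funext x; rw [setIntegral_const, measureReal_def, vol_I1]; simp
    rw [e6]; simp
  rw [e3]
  -- bound ∫ B^2 by ∫∫ (py h)^2 and a^2 by ∫∫ (px h)^2
  have hb2 : ∫ x in Icc (0:ℝ) 1, (B x)^2 ≤ ∫ p in QQ, (py h p)^2 := by
    rw [fub1 (fun p => (py h p)^2) (hpyc.pow 2)]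
    refine setIntegral_mono_on ((hBc.pow 2).continuousOn.integrableOn_compact isCompact_Icc)
      ?_ measurableSet_Icc ?_
    · have : Continuous (fun x => ∫ y in (0:ℝ)..1, (py h (x,y))^2) :=
        cont_param1 (fun p => (py h p)^2) (hpyc.pow 2)
      have e : (fun x => ∫ y in Icc (0:ℝ) 1, (py h (x,y))^2)
          = fun x => ∫ y in (0:ℝ)..1, (py h (x,y))^2 := by
        funext x; exact icc_eq _
      rw [e]
      exact this.continuousOn.integrableOn_compact isCompact_Icc
    · intro x _
      have := cs_I1 (fun t => |py h (x,t)|)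
        ((hpyc.comp (continuous_const.prodMk continuous_id)).abs)
      rw [← hBIcc x] at this
      refine this.trans (le_of_eq ?_)
      congr 1; funext t; rw [sq_abs]
  have ha2 : a^2 ≤ ∫ p in QQ, (px h p)^2 := by
    have := cs_QQ (fun q => |px h q|) hpxc.abs
    rw [← ha] at this
    refine this.trans (le_of_eq ?_)
    congr 1; funext q; rw [sq_abs]
  linarith
lemma sm_snd : Sm (fun p : ℝ×ℝ => p.2) := contDiff_snd

lemma fderiv_snd' (q : ℝ×ℝ) : fderiv ℝ (fun p : ℝ×ℝ => p.2) q
    = ContinuousLinearMap.snd ℝ ℝ ℝ := hasFDerivAt_snd.fderiv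

lemma px_snd (q : ℝ×ℝ) : px (fun p : ℝ×ℝ => p.2) q = 0 := by
  rw [px, fderiv_snd']; rfl
lemma py_snd (q : ℝ×ℝ) : py (fun p : ℝ×ℝ => p.2) q = 1 := by
  rw [py, fderiv_snd']; rfl
lemma px_zero_fun (q : ℝ×ℝ) : px (fun _ : ℝ×ℝ => (0:ℝ)) q = 0 := by
  rw [px, fderiv_const_apply]; rfl
lemma py_zero_fun (q : ℝ×ℝ) : py (fun _ : ℝ×ℝ => (0:ℝ)) q = 0 := by
  rw [py, fderiv_const_apply]; rfl

lemma py_sub_const (f : ℝ×ℝ → ℝ) (c : ℝ) (p : ℝ×ℝ) :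
    py (fun q => f q - c) p = py f p := by
  rw [py, py, fderiv_sub_const]

lemma lap_simp (u : ℝ×ℝ → ℝ×ℝ) (h : ℝ×ℝ → ℝ)
    (hu1 : Sm (fun q => (u q).1)) (hu2 : Sm (fun q => (u q).2))
    (hdiv : ∀ p : ℝ×ℝ, p.2 ∈ Icc (0:ℝ) 1 →
      px (fun q => (u q).1) p + py (fun q => (u q).2) p = 0)
    (hpde : ∀ p ∈ QQ,
      px (px h) p + py (py h) p
        = -(px (fun q => (u q).1 * px U1 q + (u q).2 * py U1 q) p
            + py (fun q => (u q).1 * px U2 q + (u q).2 * py U2 q) p)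
          - (px (fun q => U1 q * px (fun r => (u r).1) q + U2 q * py (fun r => (u r).1) q) p
            + py (fun q => U1 q * px (fun r => (u r).2) q + U2 q * py (fun r => (u r).2) q) p)) :
    ∀ p ∈ QQ, px (px h) p + py (py h) p = -2 * px (fun q => (u q).2) p := by
  intro p hp
  have hp2 : p.2 ∈ Icc (0:ℝ) 1 := ((Set.mem_prod.mp hp).2)
  have key := hpde p hp
  -- simplify term 1
  have e1 : (fun q => (u q).1 * px U1 q + (u q).2 * py U1 q) = (fun q => (u q).2) := by
    funext q
    rw [show px U1 q = 0 from px_snd q, show py U1 q = 1 from py_snd q]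
    ring
  have e2 : (fun q => (u q).1 * px U2 q + (u q).2 * py U2 q) = (fun _ => (0:ℝ)) := by
    funext q
    rw [show px U2 q = 0 from px_zero_fun q, show py U2 q = 0 from py_zero_fun q]
    ring
  have e3 : (fun q => U1 q * px (fun r => (u r).1) q + U2 q * py (fun r => (u r).1) q)
      = (fun q => q.2 * px (fun r => (u r).1) q) := by
    funext q; show q.2 * _ + 0 * _ = _; ring
  have e4 : (fun q => U1 q * px (fun r => (u r).2) q + U2 q * py (fun r => (u r).2) q)
      = (fun q => q.2 * px (fun r => (u r).2) q) := by
    funext q; show q.2 * _ + 0 * _ = _; ring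
  rw [e1, e2, e3, e4] at key
  -- compute the derivative terms
  have k1 : px (fun q => q.2 * px (fun r => (u r).1) q) p
      = p.2 * px (px (fun r => (u r).1)) p := by
    rw [px_mul (fun q : ℝ×ℝ => q.2) (px (fun r => (u r).1)) sm_snd (sm_px _ hu1) p,
      px_snd]
    ring
  have k2 : py (fun q => q.2 * px (fun r => (u r).2) q) p
      = px (fun r => (u r).2) p + p.2 * py (px (fun r => (u r).2)) p := by
    rw [py_mul (fun q : ℝ×ℝ => q.2) (px (fun r => (u r).2)) sm_snd (sm_px _ hu2) p,
      py_snd]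
    ring
  rw [k1, k2, py_zero_fun] at key
  -- divergence-free: the mixed term vanishes
  have hdivzero : px (px (fun r => (u r).1)) p + py (px (fun r => (u r).2)) p = 0 := by
    have hF : Sm (fun q => px (fun r => (u r).1) q + py (fun r => (u r).2) q) :=
      (sm_px _ hu1).add (sm_py _ hu2)
    have hda := hasDerivAt_px (fun q => px (fun r => (u r).1) q + py (fun r => (u r).2) q)
      hF p.1 p.2
    have hzero : (fun t => (fun q => px (fun r => (u r).1) q + py (fun r => (u r).2) q) (t, p.2))
        = fun _ => (0:ℝ) := funext fun t => hdiv (t, p.2) hp2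
    rw [hzero] at hda
    have huniq := (hasDerivAt_const p.1 (0:ℝ)).unique hda
    have hsplit : px (fun q => px (fun r => (u r).1) q + py (fun r => (u r).2) q) (p.1, p.2)
        = px (px (fun r => (u r).1)) (p.1,p.2) + px (py (fun r => (u r).2)) (p.1,p.2) :=
      px_add _ _ (sm_px _ hu1) (sm_py _ hu2) (p.1,p.2)
    have hcomm : px (py (fun r => (u r).2)) (p.1,p.2) = py (px (fun r => (u r).2)) (p.1,p.2) :=
      pxpy_comm _ hu2 (p.1,p.2)
    have : px (px (fun r => (u r).1)) (p.1,p.2) + py (px (fun r => (u r).2)) (p.1,p.2) = 0 := by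
      rw [← hcomm, ← hsplit, ← huniq]
    simpa using this
  rw [key]
  have : p.2 * px (px fun r => (u r).1) p + (px (fun r => (u r).2) p
      + p.2 * py (px fun r => (u r).2) p)
      = p.2 * (px (px (fun r => (u r).1)) p + py (px (fun r => (u r).2)) p)
        + px (fun r => (u r).2) p := by ring
  rw [this, hdivzero]
  ring
lemma int_addQ (f g : ℝ×ℝ → ℝ) (hf : Continuous f) (hg : Continuous g) :
    ∫ p in QQ, (f p + g p) = (∫ p in QQ, f p) + ∫ p in QQ, g p :=
  integral_add (integrableOn_QQ f hf) (integrableOn_QQ g hg)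

lemma int_monoQ (f g : ℝ×ℝ → ℝ) (hf : Continuous f) (hg : Continuous g)
    (hle : ∀ p ∈ QQ, f p ≤ g p) : ∫ p in QQ, f p ≤ ∫ p in QQ, g p :=
  setIntegral_mono_on (integrableOn_QQ f hf) (integrableOn_QQ g hg) msQQ hle

lemma int_congrQ (f g : ℝ×ℝ → ℝ) (hfg : ∀ p ∈ QQ, f p = g p) :
    ∫ p in QQ, f p = ∫ p in QQ, g p :=
  setIntegral_congr_fun msQQ hfg

lemma int_nonnegQ (f : ℝ×ℝ → ℝ) (h : ∀ p ∈ QQ, 0 ≤ f p) : 0 ≤ ∫ p in QQ, f p :=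
  setIntegral_nonneg msQQ h

lemma int_addI (f g : ℝ → ℝ) (hf : Continuous f) (hg : Continuous g) :
    ∫ x in Icc (0:ℝ) 1, (f x + g x) = (∫ x in Icc (0:ℝ) 1, f x) + ∫ x in Icc (0:ℝ) 1, g x :=
  integral_add (hf.continuousOn.integrableOn_compact isCompact_Icc)
    (hg.continuousOn.integrableOn_compact isCompact_Icc)
lemma young1 (a b r : ℝ) : (1/r)*(a*b) ≤ (1/4)*a^2 + (1/r^2)*b^2 := by
  have h1 : (1/r)*(a*b) = a*(b/r) := by ring
  have h2 : (1/r^2)*b^2 = (b/r)^2 := by ring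
  rw [h1, h2]; nlinarith [sq_nonneg (a/2 - b/r)]
lemma young2 (a b r : ℝ) : (1/r)*(a*b) ≤ (1/16)*a^2 + 4*((1/r^2)*b^2) := by
  have h1 : (1/r)*(a*b) = a*(b/r) := by ring
  have h2 : (1/r^2)*b^2 = (b/r)^2 := by ring
  rw [h1, h2]; nlinarith [sq_nonneg (a/4 - 2*(b/r))]
lemma young3 (a b : ℝ) : (-2)*(a*b) ≤ (1/4)*a^2 + 4*b^2 := by
  nlinarith [sq_nonneg (a/2 + 2*b)]
theorem stmt7 :
    ∃ C : ℝ, 0 < C ∧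
    ∀ (u : ℝ × ℝ → ℝ × ℝ) (h : ℝ × ℝ → ℝ) (R : ℝ), 0 < R →
    ContDiff ℝ (⊤ : ℕ∞) u → ContDiff ℝ (⊤ : ℕ∞) h →
    (∀ x y, u (x + 1, y) = u (x, y)) →
    (∀ x y, h (x + 1, y) = h (x, y)) →
    (∀ x : ℝ, u (x, 0) = 0 ∧ u (x, 1) = 0) →
    -- divergence free
    (∀ p : ℝ × ℝ, p.2 ∈ Icc (0:ℝ) 1 →
      px (fun q => (u q).1) p + py (fun q => (u q).2) p = 0) →
    -- Δh = −∇·((u·∇)U) − ∇·((U·∇)u)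
    (∀ p ∈ (Icc (0:ℝ) 1 ×ˢ Icc (0:ℝ) 1),
      px (px h) p + py (py h) p
        = -(px (fun q => (u q).1 * px U1 q + (u q).2 * py U1 q) p
            + py (fun q => (u q).1 * px U2 q + (u q).2 * py U2 q) p)
          - (px (fun q => U1 q * px (fun r => (u r).1) q + U2 q * py (fun r => (u r).1) q) p
            + py (fun q => U1 q * px (fun r => (u r).2) q + U2 q * py (fun r => (u r).2) q) p)) →
    -- Neumann boundary conditions
    (∀ x : ℝ, py h (x, 0) = (1 / R) * py (py (fun q => (u q).2)) (x, 0)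
            ∧ py h (x, 1) = (1 / R) * py (py (fun q => (u q).2)) (x, 1)) →
    (∫ p in (Icc (0:ℝ) 1 ×ˢ Icc (0:ℝ) 1), ((px h p) ^ 2 + (py h p) ^ 2))
      ≤ C * ((∫ p in (Icc (0:ℝ) 1 ×ˢ Icc (0:ℝ) 1),
                (‖u p‖ ^ 2 + (px (fun q => (u q).1) p) ^ 2 + (py (fun q => (u q).1) p) ^ 2
                  + (px (fun q => (u q).2) p) ^ 2 + (py (fun q => (u q).2) p) ^ 2))
          + (1 / R ^ 2) * (∫ p in (Icc (0:ℝ) 1 ×ˢ Icc (0:ℝ) 1),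
                (py (py (fun q => (u q).2)) p) ^ 2)
          + (1 / R ^ 2) * (∫ p in (Icc (0:ℝ) 1 ×ˢ Icc (0:ℝ) 1),
                (py (py (py (fun q => (u q).2))) p) ^ 2)) := by
  refine ⟨16, by norm_num, ?_⟩
  intro u h R hR hu hh hperu hperh hbc0 hdiv hpde hneum
  have hQrw : Icc (0:ℝ) 1 ×ˢ Icc (0:ℝ) 1 = QQ := rfl
  rw [hQrw] at hpde ⊢
  have hu' : ContDiff ℝ (⊤:ℕ∞) u := hu.of_le (by simp)
  have hh' : Sm h := hh.of_le (by simp)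
  have hu1 : Sm (fun q => (u q).1) := contDiff_fst.comp hu'
  have hu2 : Sm (fun q => (u q).2) := contDiff_snd.comp hu'
  have hperu2 : ∀ x y, (u (x+1,y)).2 = (u (x,y)).2 := fun x y => by rw [hperu]
  -- continuity shorthands
  have cpx : Continuous (px h) := (sm_px h hh').cont
  have cpy : Continuous (py h) := (sm_py h hh').cont
  have cu2 : Continuous (fun q => (u q).2) := hu2.cont
  have hsmw : Sm (py (py (fun q => (u q).2))) := sm_py _ (sm_py _ hu2)
  have hsmw' : Sm (py (py (py (fun q => (u q).2)))) := sm_py _ hsmw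
  have cw : Continuous (py (py (fun q => (u q).2))) := hsmw.cont
  have cw' : Continuous (py (py (py (fun q => (u q).2)))) := hsmw'.cont
  set c := ∫ q in QQ, h q with hc
  set X := ∫ p in QQ, (px h p)^2 with hX
  set Y := ∫ p in QQ, (py h p)^2 with hY
  set W2 := ∫ p in QQ, (py (py (fun q => (u q).2)) p)^2 with hW2
  set W3 := ∫ p in QQ, (py (py (py (fun q => (u q).2))) p)^2 with hW3
  have hIsplit : ∫ p in QQ, ((px h p)^2 + (py h p)^2) = X + Y :=
    int_addQ _ _ (cpx.pow 2) (cpy.pow 2)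
  rw [hIsplit]
  -- integration by parts identities
  have A1 := ibp_x h (px h) hh' (sm_px h hh') hperh (per_px h hh' hperh)
  rw [int_addQ _ _ (cpx.fun_mul cpx) (hh'.cont.fun_mul (sm_px _ (sm_px h hh')).cont)] at A1
  have eX : ∫ p in QQ, (px h p * px h p) = X :=
    int_congrQ _ _ (fun p _ => (pow_two (px h p)).symm)
  rw [eX] at A1
  have A2 := ibp_y h (py h) hh' (sm_py h hh')
  rw [int_addQ _ _ (cpy.fun_mul cpy) (hh'.cont.fun_mul (sm_py _ (sm_py h hh')).cont)] at A2
  have eY : ∫ p in QQ, (py h p * py h p) = Y :=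
    int_congrQ _ _ (fun p _ => (pow_two (py h p)).symm)
  rw [eY] at A2
  have A3 := ibp_x h (fun q => (u q).2) hh' hu2 hperh (fun x y => hperu2 x y)
  rw [int_addQ _ _ (cpx.fun_mul cu2) (hh'.cont.fun_mul (sm_px _ hu2).cont)] at A3
  -- Laplacian simplification and zero-average facts
  have hlap := lap_simp u h hu1 hu2 hdiv hpde
  have hzero_pxu2 : ∫ p in QQ, px (fun q => (u q).2) p = 0 :=
    setint_px_zero _ hu2 (fun x y => hperu2 x y)
  have hzero_pxpxh : ∫ p in QQ, px (px h) p = 0 :=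
    setint_px_zero _ (sm_px h hh') (per_px h hh' hperh)
  have hzero_pypyh : ∫ p in QQ, py (py h) p = 0 := by
    have e1 : ∫ p in QQ, (px (px h) p + py (py h) p)
        = ∫ p in QQ, (-2 * px (fun q => (u q).2) p) := int_congrQ _ _ hlap
    rw [int_addQ _ _ (sm_px _ (sm_px h hh')).cont (sm_py _ (sm_py h hh')).cont,
      hzero_pxpxh, MeasureTheory.integral_const_mul, hzero_pxu2] at e1
    linarith [e1]
  -- ∫ h Δh = 2 ∫ (px h) u₂
  have hlap_int : ∫ p in QQ, (h p * px (px h) p + h p * py (py h) p)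
      = 2 * ∫ p in QQ, (px h p * (u p).2) := by
    have e1 : ∫ p in QQ, (h p * px (px h) p + h p * py (py h) p)
        = ∫ p in QQ, (-2) * (h p * px (fun q => (u q).2) p) := by
      apply int_congrQ
      intro p hp
      have hl := hlap p hp
      calc h p * px (px h) p + h p * py (py h) p
          = h p * (px (px h) p + py (py h) p) := by ring
        _ = h p * (-2 * px (fun q => (u q).2) p) := by rw [hl]
        _ = (-2) * (h p * px (fun q => (u q).2) p) := by ring
    rw [e1, MeasureTheory.integral_const_mul]
    have e2 : ∫ p in QQ, h p * px (fun q => (u q).2) p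
        = - ∫ p in QQ, (px h p * (u p).2) := by linarith [A3]
    rw [e2]; ring
  -- boundary term
  have hBdy : ∫ x in Icc (0:ℝ) 1, (h (x,1) * py h (x,1) - h (x,0) * py h (x,0))
      = (1/R) * ∫ p in QQ, (py h p * py (py (fun q => (u q).2)) p
          + (h p - c) * py (py (py (fun q => (u q).2))) p) := by
    have hsplitp : (fun x : ℝ => h (x,1) * py h (x,1) - h (x,0) * py h (x,0))
        = fun x => ((1/R) * ((h (x,1) - c) * py (py (fun q => (u q).2)) (x,1)
            - (h (x,0) - c) * py (py (fun q => (u q).2)) (x,0)))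
          + c * (py h (x,1) - py h (x,0)) := by
      funext x
      rw [(hneum x).1, (hneum x).2]
      ring
    rw [hsplitp]
    have cA1 : Continuous (fun x : ℝ => ((x:ℝ), (1:ℝ))) := continuous_id.prodMk continuous_const
    have cA0 : Continuous (fun x : ℝ => ((x:ℝ), (0:ℝ))) := continuous_id.prodMk continuous_const
    have cF1 : Continuous (fun x : ℝ => (1/R) * ((h (x,1) - c) * py (py (fun q => (u q).2)) (x,1)
        - (h (x,0) - c) * py (py (fun q => (u q).2)) (x,0))) :=
      continuous_const.mul ((((hh'.cont.comp cA1).sub continuous_const).mul (cw.comp cA1)).sub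
        (((hh'.cont.comp cA0).sub continuous_const).mul (cw.comp cA0)))
    have cF2 : Continuous (fun x : ℝ => c * (py h (x,1) - py h (x,0))) :=
      continuous_const.mul ((cpy.comp cA1).sub (cpy.comp cA0))
    rw [int_addI _ _ cF1 cF2]
    -- second piece vanishes
    have hsec : ∫ x in Icc (0:ℝ) 1, c * (py h (x,1) - py h (x,0)) = 0 := by
      rw [MeasureTheory.integral_const_mul, bdry_to_area (py h) (sm_py h hh'), hzero_pypyh,
        mul_zero]
    rw [hsec, add_zero, MeasureTheory.integral_const_mul]
    congr 1
    -- first piece: boundary to area for (h - c) * w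
    have hsmφw : Sm (fun p => (h p - c) * py (py (fun q => (u q).2)) p) :=
      (hh'.sub contDiff_const).mul hsmw
    have hb := bdry_to_area (fun p => (h p - c) * py (py (fun q => (u q).2)) p) hsmφw
    rw [hb]
    apply int_congrQ
    intro p _
    rw [py_mul (fun q => h q - c) (py (py (fun q => (u q).2)))
      (hh'.sub contDiff_const) hsmw p, py_sub_const]
  -- main identity
  have hmain : X + Y = (1/R) * (∫ p in QQ, (py h p * py (py (fun q => (u q).2)) p
      + (h p - c) * py (py (py (fun q => (u q).2))) p))
      - 2 * (∫ p in QQ, (px h p * (u p).2)) := by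
    have hsum : (∫ p in QQ, h p * px (px h) p) + (∫ p in QQ, h p * py (py h) p)
        = 2 * ∫ p in QQ, (px h p * (u p).2) := by
      rw [← int_addQ _ _ (hh'.cont.fun_mul (sm_px _ (sm_px h hh')).cont)
        (hh'.cont.fun_mul (sm_py _ (sm_py h hh')).cont)]
      exact hlap_int
    linarith [A1, A2, hsum, hBdy]
  -- split the boundary integral
  have hsplit2 : ∫ p in QQ, (py h p * py (py (fun q => (u q).2)) p
      + (h p - c) * py (py (py (fun q => (u q).2))) p)
      = (∫ p in QQ, py h p * py (py (fun q => (u q).2)) p)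
        + ∫ p in QQ, (h p - c) * py (py (py (fun q => (u q).2))) p :=
    int_addQ _ _ (cpy.mul cw) ((hh'.cont.sub continuous_const).mul cw')
  -- Poincaré
  have P := poincare h hh'
  rw [← hc, ← hX, ← hY] at P
  -- bounds
  have b1 : (1/R) * ∫ p in QQ, (py h p * py (py (fun q => (u q).2)) p)
      ≤ (1/4)*Y + (1/R^2)*W2 := by
    rw [← MeasureTheory.integral_const_mul]
    have hpt : ∀ p ∈ QQ, (1/R) * (py h p * py (py (fun q => (u q).2)) p)
        ≤ (1/4)*(py h p)^2 + (1/R^2)*(py (py (fun q => (u q).2)) p)^2 :=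
      fun p _ => young1 _ _ R
    have hm : ∫ p in QQ, ((1/R) * (py h p * py (py (fun q => (u q).2)) p))
        ≤ ∫ p in QQ, ((1/4)*(py h p)^2 + (1/R^2)*(py (py (fun q => (u q).2)) p)^2) :=
      int_monoQ _ _ (continuous_const.mul (cpy.mul cw))
        ((continuous_const.mul (cpy.pow 2)).add (continuous_const.mul (cw.pow 2))) hpt
    refine hm.trans (le_of_eq ?_)
    rw [int_addQ _ _ (continuous_const.fun_mul (cpy.fun_pow 2)) (continuous_const.fun_mul (cw.fun_pow 2)),
      MeasureTheory.integral_const_mul, MeasureTheory.integral_const_mul]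
  have b2 : (1/R) * ∫ p in QQ, ((h p - c) * py (py (py (fun q => (u q).2))) p)
      ≤ (1/16) * (∫ p in QQ, (h p - c)^2) + 4*((1/R^2)*W3) := by
    rw [← MeasureTheory.integral_const_mul]
    have hpt : ∀ p ∈ QQ, (1/R) * ((h p - c) * py (py (py (fun q => (u q).2))) p)
        ≤ (1/16)*(h p - c)^2 + 4*((1/R^2)*(py (py (py (fun q => (u q).2))) p)^2) :=
      fun p _ => young2 _ _ R
    have hm : ∫ p in QQ, ((1/R) * ((h p - c) * py (py (py (fun q => (u q).2))) p))
        ≤ ∫ p in QQ, ((1/16)*(h p - c)^2 + 4*((1/R^2)*(py (py (py (fun q => (u q).2))) p)^2)) :=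
      int_monoQ _ _ (continuous_const.mul ((hh'.cont.sub continuous_const).mul cw'))
        ((continuous_const.mul ((hh'.cont.sub continuous_const).pow 2)).add
          (continuous_const.mul (continuous_const.mul (cw'.pow 2)))) hpt
    refine hm.trans (le_of_eq ?_)
    rw [int_addQ _ _ (continuous_const.fun_mul ((hh'.cont.fun_sub continuous_const).fun_pow 2))
      (continuous_const.fun_mul (continuous_const.fun_mul (cw'.fun_pow 2))),
      MeasureTheory.integral_const_mul, MeasureTheory.integral_const_mul,
      MeasureTheory.integral_const_mul]
  have b3 : (-2) * ∫ p in QQ, (px h p * (u p).2)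
      ≤ (1/4)*X + 4*(∫ p in QQ, ((u p).2)^2) := by
    rw [← MeasureTheory.integral_const_mul]
    have hpt : ∀ p ∈ QQ, (-2) * (px h p * (u p).2)
        ≤ (1/4)*(px h p)^2 + 4*((u p).2)^2 := fun p _ => young3 _ _
    have hm : ∫ p in QQ, ((-2) * (px h p * (u p).2))
        ≤ ∫ p in QQ, ((1/4)*(px h p)^2 + 4*((u p).2)^2) :=
      int_monoQ _ _ (continuous_const.mul (cpx.mul cu2))
        ((continuous_const.mul (cpx.pow 2)).add
          (continuous_const.mul (cu2.pow 2))) hpt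
    refine hm.trans (le_of_eq ?_)
    rw [int_addQ _ _ (continuous_const.fun_mul (cpx.fun_pow 2))
      (continuous_const.fun_mul ((cu2).fun_pow 2)),
      MeasureTheory.integral_const_mul, MeasureTheory.integral_const_mul]
  -- compare V with the big integrand
  have hV : (∫ p in QQ, ((u p).2)^2)
      ≤ ∫ p in QQ, (‖u p‖^2 + (px (fun q => (u q).1) p)^2 + (py (fun q => (u q).1) p)^2
          + (px (fun q => (u q).2) p)^2 + (py (fun q => (u q).2) p)^2) := by
    apply int_monoQ _ _ (cu2.fun_pow 2)
      (((((hu'.continuous.norm.fun_pow 2).fun_add ((sm_px _ hu1).cont.fun_pow 2)).fun_add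
        ((sm_py _ hu1).cont.fun_pow 2)).fun_add ((sm_px _ hu2).cont.fun_pow 2)).fun_add
        ((sm_py _ hu2).cont.fun_pow 2))
    intro p _
    have h1 : ‖(u p).2‖ ≤ ‖u p‖ := norm_snd_le (u p)
    have h2 : ((u p).2)^2 ≤ ‖u p‖^2 := by
      have := pow_le_pow_left₀ (norm_nonneg _) h1 2
      simpa [Real.norm_eq_abs, sq_abs] using this
    nlinarith [sq_nonneg (px (fun q => (u q).1) p), sq_nonneg (py (fun q => (u q).1) p),
      sq_nonneg (px (fun q => (u q).2) p), sq_nonneg (py (fun q => (u q).2) p)]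
  -- nonnegativity facts
  have hXnn : 0 ≤ X := int_nonnegQ _ (fun p _ => sq_nonneg _)
  have hYnn : 0 ≤ Y := int_nonnegQ _ (fun p _ => sq_nonneg _)
  have hW2nn : 0 ≤ W2 := int_nonnegQ _ (fun p _ => sq_nonneg _)
  have hW3nn : 0 ≤ W3 := int_nonnegQ _ (fun p _ => sq_nonneg _)
  have hVnn : 0 ≤ ∫ p in QQ, ((u p).2)^2 := int_nonnegQ _ (fun p _ => sq_nonneg _)
  have hanm : 0 ≤ (1/R^2)*W2 := mul_nonneg (by positivity) hW2nn
  have hbnm : 0 ≤ (1/R^2)*W3 := mul_nonneg (by positivity) hW3nn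
  -- combine
  have hdistrib : (1/R) * ((∫ p in QQ, py h p * py (py (fun q => (u q).2)) p)
      + ∫ p in QQ, (h p - c) * py (py (py (fun q => (u q).2))) p)
      = (1/R) * (∫ p in QQ, py h p * py (py (fun q => (u q).2)) p)
        + (1/R) * ∫ p in QQ, (h p - c) * py (py (py (fun q => (u q).2))) p := by ring
  rw [hsplit2] at hmain
  rw [hdistrib] at hmain
  linarith [hmain, b1, b2, b3, P, hV, hXnn, hYnn, hanm, hbnm, hVnn]
end
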